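/- arXiv:1307.5329 — 2 statements merged into one kernel-verified Lean document; each statement's English description precedes it below -/
import Mathlib

section
/- Let φ be the Fibonacci morphism (φ(0)=01, φ(1)=0), f_n = φ^{n-1}(0), and define p_n for n ≥ 2 by f_n = p_n · a · b where ab ∈ {01, 10} (i.e., p_n is f_n with its last two letters removed). Then for all n ≥ 2, φ(p_n)·0 = p_{n+1}. -/
/-!
Write `f_n = p · a · ā` with `a` a letter and `ā` its complement. Since
`φ(a) φ(ā) = 0 · ā · a`, applying `φ` gives `f_{n+1} = (φ(p) · 0) · ā · a`: the shape
is preserved, and the prefix of `f_{n+1}` before its last two letters is `φ(p) · 0`.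
-/

/-- The Fibonacci morphism on letters: φ(0)=01, φ(1)=0 (0 = `false`, 1 = `true`). -/
def phi : Bool → List Bool
  | false => [false, true]
  | true  => [false]

/-- The Fibonacci morphism extended to words. -/
def phiW (w : List Bool) : List Bool := w.flatMap phi

/-- The finite Fibonacci words: `fibw n = φ^{n-1}(0)` for `n ≥ 1`. -/
def fibw (n : ℕ) : List Bool := phiW^[n - 1] [false]

/-- The bispecial factors of the Fibonacci word: `fibw n` with its
last two letters removed. -/
def pbis (n : ℕ) : List Bool := (fibw n).dropLast.dropLast

theorem phiW_append (u v : List Bool) : phiW (u ++ v) = phiW u ++ phiW v :=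
  List.flatMap_append

theorem phiW_append_pair (p : List Bool) (a : Bool) :
    phiW (p ++ [a, !a]) = (phiW p ++ [false]) ++ [!a, !!a] := by
  rw [phiW_append, List.append_assoc]
  cases a <;> rfl

theorem fibw_succ {n : ℕ} (hn : 1 ≤ n) : fibw (n + 1) = phiW (fibw n) := by
  obtain ⟨m, rfl⟩ := Nat.exists_eq_add_of_le' hn
  simp only [fibw, Nat.add_sub_cancel, Function.iterate_succ_apply']

theorem fibw_eq_append_pair {n : ℕ} (hn : 2 ≤ n) : ∃ p a, fibw n = p ++ [a, !a] := by
  induction n, hn using Nat.le_induction with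
  | base => exact ⟨[], false, rfl⟩
  | succ m _ ih =>
    obtain ⟨p, a, hp⟩ := ih
    exact ⟨phiW p ++ [false], !a, by rw [fibw_succ (by omega), hp, phiW_append_pair]⟩

theorem pbis_eq_of_fibw_eq {n : ℕ} {p : List Bool} {a b : Bool} (h : fibw n = p ++ [a, b]) :
    pbis n = p := by
  simp [pbis, h]

theorem fib_bispecial_rec (n : ℕ) (hn : 2 ≤ n) :
    phiW (pbis n) ++ [false] = pbis (n + 1) := by
  obtain ⟨p, a, hp⟩ := fibw_eq_append_pair hn
  have hsucc : fibw (n + 1) = (phiW p ++ [false]) ++ [!a, !!a] := by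
    rw [fibw_succ (by omega), hp, phiW_append_pair]
  rw [pbis_eq_of_fibw_eq hp, pbis_eq_of_fibw_eq hsucc]
end

section
/- Let φ be the Fibonacci morphism, f_k = φ^{k-1}(0), and for n ≥ 2 let p_n be f_n with its last two letters removed. Then for all n ≥ 0: 0 · φ²(0) · φ¹(0) · φ²(0) · φ³(0) ··· φ^{2n}(0) · φ^{2n+3}(0) = 0 · f_{2n+3} · f_{2n+4}, and this word equals 0·p_{2n+5}·0·1. -/
theorem List.flatten_map_range_eq_of_fib_rec {α : Type*} (x : ℕ → List α)
    (hx : ∀ k, x (k + 2) = x (k + 1) ++ x k) (m : ℕ) :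
    x 2 ++ ((List.range (2 * m)).map (fun j => x (j + 1))).flatten = x (2 * m + 2) := by
  induction m with
  | zero => simp
  | succ m ih =>
    rw [show 2 * (m + 1) = 2 * m + 1 + 1 by ring, List.range_succ, List.range_succ]
    simp only [List.map_append, List.flatten_append, List.map_cons, List.map_nil,
      List.flatten_cons, List.flatten_nil, List.append_nil, ← List.append_assoc, ih]
    rw [hx (2 * m + 2), hx (2 * m + 1)]

theorem List.dropLast_dropLast_append_pair {α : Type*} (w : List α) (a b : α) :
    (w ++ [a, b]).dropLast.dropLast = w := by
  simp

theorem phiW_iterate_append (k : ℕ) (u v : List Bool) :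
    phiW^[k] (u ++ v) = phiW^[k] u ++ phiW^[k] v := by
  induction k generalizing u v with
  | zero => rfl
  | succ k ih => rw [Function.iterate_succ_apply, phiW_append, ih]; rfl

theorem phiW_iterate_add_two (k : ℕ) :
    phiW^[k + 2] [false] = phiW^[k + 1] [false] ++ phiW^[k] [false] := by
  rw [Function.iterate_add_apply, Function.iterate_add_apply phiW k 1,
    show phiW^[2] [false] = [false, true] ++ [false] from rfl, phiW_iterate_append]
  rfl

theorem phiW_iterate_append_swap (k : ℕ) : ∃ w : List Bool,
    phiW^[k] [false] ++ phiW^[k + 1] [false] = w ++ [k.bodd, !k.bodd] ∧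
    phiW^[k + 1] [false] ++ phiW^[k] [false] = w ++ [!k.bodd, k.bodd] := by
  induction k with
  | zero => exact ⟨[false], rfl, rfl⟩
  | succ k ih =>
    obtain ⟨w, hw, hw_swap⟩ := ih
    refine ⟨phiW^[k + 1] [false] ++ w, ?_, ?_⟩
    · rw [phiW_iterate_add_two, hw_swap, List.append_assoc, Nat.bodd_succ, Bool.not_not]
    · rw [phiW_iterate_add_two, List.append_assoc, hw, Nat.bodd_succ, Bool.not_not,
        List.append_assoc]

theorem fib_expansion_identity (n : ℕ) :
    [false] ++ phiW^[2] [false] ++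
        ((List.range (2 * n)).map (fun j => phiW^[j + 1] [false])).flatten ++
        phiW^[2 * n + 3] [false]
      = [false] ++ fibw (2 * n + 3) ++ fibw (2 * n + 4) ∧
    [false] ++ fibw (2 * n + 3) ++ fibw (2 * n + 4)
      = [false] ++ pbis (2 * n + 5) ++ [false, true] := by
  have hf3 : fibw (2 * n + 3) = phiW^[2 * n + 2] [false] := rfl
  have hf4 : fibw (2 * n + 4) = phiW^[2 * n + 3] [false] := rfl
  have hf5 : fibw (2 * n + 5) = phiW^[2 * n + 3] [false] ++ phiW^[2 * n + 2] [false] :=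
    phiW_iterate_add_two (2 * n + 2)
  obtain ⟨w, hw, hw_swap⟩ := phiW_iterate_append_swap (2 * n + 2)
  have hbodd : (2 * n + 2).bodd = false := by simp
  simp only [hbodd, Bool.not_false] at hw hw_swap
  constructor
  · rw [hf3, hf4, List.append_assoc [false],
      List.flatten_map_range_eq_of_fib_rec (fun k => phiW^[k] [false]) phiW_iterate_add_two]
  · rw [pbis, hf5, hw_swap, List.dropLast_dropLast_append_pair, List.append_assoc _ (fibw _),
      hf3, hf4, hw, List.append_assoc]
end
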